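/- arXiv:2211.04400 — 2 statements merged into one kernel-verified Lean document; each statement's English description precedes it below -/
import Mathlib

section
/- Let χ be an N×N Hermitian complex matrix. Among all positive semidefinite N×N matrices P, the Frobenius-norm distance ‖χ − P‖_F is minimized uniquely by χ⁺ = (χ + √(χ†χ))/2, the matrix obtained from χ by replacing all negative eigenvalues with zero. -/
open Matrix
open scoped ComplexOrder

/-- Frobenius norm of a complex matrix: `‖X‖_F = √(Tr (Xᴴ X))`. -/
noncomputable def frobNorm {N : ℕ} (X : Matrix (Fin N) (Fin N) ℂ) : ℝ :=
  Real.sqrt ((Xᴴ * X).trace.re)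

/-- The square root of a positive semidefinite matrix (as `Matrix.PosSemidef.sqrt` was defined in
Mathlib of December 2024). -/
noncomputable def Matrix.PosSemidef.sqrt {n : Type*} [Fintype n] [DecidableEq n] {𝕜 : Type*} [RCLike 𝕜]
    {A : Matrix n n 𝕜} (hA : A.PosSemidef) : Matrix n n 𝕜 :=
  hA.1.eigenvectorUnitary.1 * diagonal ((↑) ∘ (√·) ∘ hA.1.eigenvalues) *
    (star hA.1.eigenvectorUnitary : Matrix n n 𝕜)

/-- The positive part of a matrix χ, i.e. `(χ + √(χᴴχ))/2`. -/
noncomputable def matPosPart {N : ℕ} (χ : Matrix (Fin N) (Fin N) ℂ) : Matrix (Fin N) (Fin N) ℂ :=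
  (2 : ℂ)⁻¹ • (χ + Matrix.PosSemidef.sqrt (Matrix.posSemidef_conjTranspose_mul_self χ))

/-!
Write `χ = χ⁺ - χ⁻` with `χ⁺, χ⁻ ⪰ 0` and `χ⁺ χ⁻ = 0`. Then `√(χᴴχ) = |χ| = χ⁺ + χ⁻`, so
`(χ + √(χᴴχ))/2 = χ⁺`. For `P ⪰ 0`, expanding with `χ⁺ χ⁻ = 0` gives
`‖χ - P‖² = ‖χ⁺ - P‖² + 2 Re Tr (P χ⁻) + ‖χ⁻‖²`, and `Tr (P χ⁻) ≥ 0` as the trace of a product of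
positive semidefinite matrices. Hence `‖χ - P‖ ≥ ‖χ⁻‖ = ‖χ - χ⁺‖`, with equality only if `P = χ⁺`.
-/

open scoped MatrixOrder

namespace Matrix

variable {n : Type*} [Fintype n] {𝕜 : Type*} [RCLike 𝕜]

lemma PosSemidef.sqrt_eq_cfcSqrt [DecidableEq n] {A : Matrix n n 𝕜} (hA : A.PosSemidef) :
    hA.sqrt = CFC.sqrt A := by
  rw [CFC.sqrt_eq_real_sqrt A hA.nonneg, cfcₙ_eq_cfc, hA.1.cfc_eq, IsHermitian.cfc,
    Unitary.conjStarAlgAut_apply, PosSemidef.sqrt]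

lemma PosSemidef.trace_mul_nonneg {A B : Matrix n n 𝕜} (hA : A.PosSemidef) (hB : B.PosSemidef) :
    0 ≤ (A * B).trace := by
  classical
  obtain ⟨C, rfl⟩ := CStarAlgebra.nonneg_iff_eq_star_mul_self.mp hB.nonneg
  rw [← Matrix.mul_assoc, trace_mul_cycle, star_eq_conjTranspose]
  exact (hA.mul_mul_conjTranspose_same C).trace_nonneg

lemma trace_conjTranspose_mul_self_sub_sub {R : Type*} [CommRing R] [StarRing R]
    {Q M P : Matrix n n R} (hQ : Q.IsHermitian) (hM : M.IsHermitian) (hP : P.IsHermitian)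
    (hQM : Q * M = 0) :
    ((Q - M - P)ᴴ * (Q - M - P)).trace =
      ((Q - P)ᴴ * (Q - P)).trace + 2 * (P * M).trace + (Mᴴ * M).trace := by
  have hMQ : M * Q = 0 := by
    rw [← hQ.eq, ← hM.eq, ← conjTranspose_mul, hQM, conjTranspose_zero]
  have hexpand : (Q - M - P) * (Q - M - P) =
      (Q - P) * (Q - P) - (Q * M + M * Q) + (P * M + M * P) + M * M := by
    noncomm_ring
  rw [(hQ.sub hM).sub hP |>.eq, (hQ.sub hP).eq, hM.eq, hexpand, hQM, hMQ]
  simp only [add_zero, sub_zero, trace_add, trace_mul_comm M P]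
  ring

end Matrix

lemma matPosPart_eq_posPart {N : ℕ} {χ : Matrix (Fin N) (Fin N) ℂ} (hχ : χ.IsHermitian) :
    matPosPart χ = χ⁺ := by
  have h := CFC.abs_add_self χ hχ.isSelfAdjoint
  rw [CFC.abs, star_eq_conjTranspose] at h
  rw [matPosPart, PosSemidef.sqrt_eq_cfcSqrt, add_comm, h, two_smul, ← two_smul ℂ, smul_smul]
  norm_num

lemma frobNorm_sq {N : ℕ} (X : Matrix (Fin N) (Fin N) ℂ) :
    frobNorm X ^ 2 = (Xᴴ * X).trace.re :=
  Real.sq_sqrt (Complex.nonneg_iff.mp (posSemidef_conjTranspose_mul_self X).trace_nonneg).1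

lemma frobNorm_nonneg {N : ℕ} (X : Matrix (Fin N) (Fin N) ℂ) : 0 ≤ frobNorm X :=
  Real.sqrt_nonneg _

lemma frobNorm_eq_zero_iff {N : ℕ} {X : Matrix (Fin N) (Fin N) ℂ} : frobNorm X = 0 ↔ X = 0 := by
  have him : (Xᴴ * X).trace.im = 0 :=
    (Complex.nonneg_iff.mp (posSemidef_conjTranspose_mul_self X).trace_nonneg).2.symm
  rw [← trace_conjTranspose_mul_self_eq_zero_iff, ← sq_eq_zero_iff, frobNorm_sq, Complex.ext_iff]
  simp [him]

lemma frobNorm_posPart_sub_sq_add_le {N : ℕ} {χ P : Matrix (Fin N) (Fin N) ℂ}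
    (hχ : χ.IsHermitian) (hP : P.PosSemidef) :
    frobNorm (χ⁺ - P) ^ 2 + frobNorm (χ - χ⁺) ^ 2 ≤ frobNorm (χ - P) ^ 2 := by
  have hQ : (χ⁺).PosSemidef := nonneg_iff_posSemidef.mp (CFC.posPart_nonneg χ)
  have hM : (χ⁻).PosSemidef := nonneg_iff_posSemidef.mp (CFC.negPart_nonneg χ)
  have hdecomp : χ⁺ - χ⁻ = χ := CFC.posPart_sub_negPart χ hχ.isSelfAdjoint
  have hsplit := trace_conjTranspose_mul_self_sub_sub hQ.1 hM.1 hP.1 (CFC.posPart_mul_negPart χ)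
  have hcross := (Complex.nonneg_iff.mp (hP.trace_mul_nonneg hM)).1
  have hres : χ - χ⁺ = -χ⁻ := by nth_rw 1 [← hdecomp]; abel
  rw [hdecomp] at hsplit
  simp only [frobNorm_sq, hres, conjTranspose_neg, neg_mul_neg, hsplit, Complex.add_re,
    Complex.mul_re]
  norm_num
  linarith

/-- Among all positive semidefinite matrices `P`, the Frobenius distance `‖χ − P‖_F` is
minimized uniquely by `χ⁺ = (χ + √(χᴴχ))/2`. -/
theorem stmt_0 {N : ℕ} (χ : Matrix (Fin N) (Fin N) ℂ) (hχ : χ.IsHermitian) :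
    (matPosPart χ).PosSemidef ∧
    (∀ P : Matrix (Fin N) (Fin N) ℂ, P.PosSemidef →
      frobNorm (χ - matPosPart χ) ≤ frobNorm (χ - P) ∧
      (frobNorm (χ - P) = frobNorm (χ - matPosPart χ) → P = matPosPart χ)) := by
  rw [matPosPart_eq_posPart hχ]
  refine ⟨nonneg_iff_posSemidef.mp (CFC.posPart_nonneg χ), fun P hP => ?_⟩
  have hsplit := frobNorm_posPart_sub_sq_add_le hχ hP
  have hgap := sq_nonneg (frobNorm (χ⁺ - P))
  refine ⟨?_, fun hdist => ?_⟩
  · exact (pow_le_pow_iff_left₀ (frobNorm_nonneg _) (frobNorm_nonneg _) two_ne_zero).mp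
      (by linarith)
  · rw [hdist] at hsplit
    have hzero : frobNorm (χ⁺ - P) = 0 := pow_eq_zero_iff two_ne_zero |>.mp (by linarith)
    exact (sub_eq_zero.mp (frobNorm_eq_zero_iff.mp hzero)).symm
end

section
/- Let A, G ∈ ℂ^n be linearly independent with λ₊ = Re⟨G,A⟩ + √(‖G‖²‖A‖² − (Im⟨G,A⟩)²) > 0. Then the vector v = (λ₊ − ⟨G,A⟩)G + ‖G‖²A is an eigenvector of χ = |A⟩⟨G| + |G⟩⟨A| with eigenvalue λ₊, and ‖v‖² = 2λ₊‖G‖²·√(‖G‖²‖A‖² − (Im⟨G,A⟩)²). -/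
/-!
The eigenvector equation for `v = (λ − ⟨G,A⟩)G + ‖G‖²A` reduces, via `χ v = ⟨G,v⟩A + ⟨A,v⟩G`, to the scalar
equation `|λ − ⟨G,A⟩|² = ‖G‖²‖A‖²`, and `λ₊` is the root of this quadratic in real `λ` with
`λ₊ ≥ Re⟨G,A⟩`; its discriminant is nonnegative by Cauchy–Schwarz. Expanding `⟨v,v⟩` with the
same two inner products `⟨G,v⟩ = λ‖G‖²` and `⟨A,v⟩ = λ(λ − ⟨G,A⟩)` gives
`‖v‖² = 2λ‖G‖² Re (λ − ⟨G,A⟩) = 2λ‖G‖²√(‖G‖²‖A‖² − (Im⟨G,A⟩)²)`.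
-/

open Matrix

/-- Standard Hermitian inner product on ℂ^n, antilinear in the first argument. -/
noncomputable def cip {n : ℕ} (x y : Fin n → ℂ) : ℂ := ∑ i, star (x i) * y i

/-- The matrix `χ = |A⟩⟨G| + |G⟩⟨A|`. -/
noncomputable def dyadSum {n : ℕ} (A G : Fin n → ℂ) : Matrix (Fin n) (Fin n) ℂ :=
  Matrix.of fun i j => A i * star (G j) + G i * star (A j)

section InnerProduct

variable {n : ℕ}

lemma cip_add_left (x y z : Fin n → ℂ) : cip (x + y) z = cip x z + cip y z := by
  simp [cip, add_mul, Finset.sum_add_distrib]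

lemma cip_add_right (x y z : Fin n → ℂ) : cip x (y + z) = cip x y + cip x z := by
  simp [cip, mul_add, Finset.sum_add_distrib]

lemma cip_smul_left (c : ℂ) (x y : Fin n → ℂ) : cip (c • x) y = star c * cip x y := by
  simp [cip, Finset.mul_sum, mul_assoc]

lemma cip_smul_right (c : ℂ) (x y : Fin n → ℂ) : cip x (c • y) = c * cip x y := by
  simp [cip, Finset.mul_sum, mul_left_comm]

lemma star_cip (x y : Fin n → ℂ) : star (cip x y) = cip y x := by
  simp [cip, star_sum, mul_comm]

lemma ofReal_re_cip_self (x : Fin n → ℂ) : ((cip x x).re : ℂ) = cip x x := by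
  refine Complex.ext rfl ?_
  simp [cip, Complex.im_sum, Complex.conj_mul', ← Complex.ofReal_pow]

lemma cip_eq_inner (x y : Fin n → ℂ) :
    cip x y = inner ℂ (WithLp.toLp 2 x : EuclideanSpace ℂ (Fin n)) (WithLp.toLp 2 y) := by
  simp [PiLp.inner_apply, cip, mul_comm]

lemma im_cip_sq_le (x y : Fin n → ℂ) : (cip x y).im ^ 2 ≤ (cip x x).re * (cip y y).re := by
  have hCS := inner_mul_inner_self_le (𝕜 := ℂ)
    (WithLp.toLp 2 x : EuclideanSpace ℂ (Fin n)) (WithLp.toLp 2 y)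
  simp only [← cip_eq_inner, ← star_cip x y, Complex.star_def, Complex.norm_conj,
    RCLike.re_to_complex] at hCS
  calc (cip x y).im ^ 2 = |(cip x y).im| * |(cip x y).im| := by rw [← sq, sq_abs]
    _ ≤ ‖cip x y‖ * ‖cip x y‖ :=
      mul_self_le_mul_self (abs_nonneg _) (Complex.abs_im_le_norm _)
    _ ≤ _ := hCS

end InnerProduct

lemma dyadSum_mulVec {n : ℕ} (A G v : Fin n → ℂ) :
    (dyadSum A G).mulVec v = cip G v • A + cip A v • G := by
  funext i
  simp only [dyadSum, mulVec, dotProduct, Matrix.of_apply, Pi.add_apply, Pi.smul_apply,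
    smul_eq_mul, cip, Finset.sum_mul, ← Finset.sum_add_distrib]
  exact Finset.sum_congr rfl fun j _ => by ring

noncomputable def dyadEigvec {n : ℕ} (A G : Fin n → ℂ) (lam : ℝ) : Fin n → ℂ :=
  ((lam : ℂ) - cip G A) • G + ((cip G G).re : ℂ) • A

section Eigvec

variable {n : ℕ} (A G : Fin n → ℂ) (lam : ℝ)

lemma cip_dyadEigvec_left : cip G (dyadEigvec A G lam) = lam * (cip G G).re := by
  rw [dyadEigvec, cip_add_right, cip_smul_right, cip_smul_right, ofReal_re_cip_self]
  ring

variable {A G lam}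

lemma cip_dyadEigvec_right
    (h : Complex.normSq ((lam : ℂ) - cip G A) = (cip G G).re * (cip A A).re) :
    cip A (dyadEigvec A G lam) = lam * ((lam : ℂ) - cip G A) := by
  have hconj := Complex.mul_conj ((lam : ℂ) - cip G A)
  rw [map_sub, Complex.conj_ofReal, ← Complex.star_def, star_cip, h] at hconj
  push_cast at hconj
  rw [ofReal_re_cip_self, ofReal_re_cip_self] at hconj
  rw [dyadEigvec, cip_add_right, cip_smul_right, cip_smul_right, ofReal_re_cip_self]
  linear_combination (-1 : ℂ) * hconj

lemma dyadSum_mulVec_dyadEigvec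
    (h : Complex.normSq ((lam : ℂ) - cip G A) = (cip G G).re * (cip A A).re) :
    (dyadSum A G).mulVec (dyadEigvec A G lam) = (lam : ℂ) • dyadEigvec A G lam := by
  rw [dyadSum_mulVec, cip_dyadEigvec_left, cip_dyadEigvec_right h, dyadEigvec]
  module

lemma re_cip_dyadEigvec_self
    (h : Complex.normSq ((lam : ℂ) - cip G A) = (cip G G).re * (cip A A).re) :
    (cip (dyadEigvec A G lam) (dyadEigvec A G lam)).re =
      2 * lam * (cip G G).re * (lam - (cip G A).re) := by
  nth_rewrite 1 [dyadEigvec]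
  rw [cip_add_left, cip_smul_left, cip_smul_left, cip_dyadEigvec_left, cip_dyadEigvec_right h]
  rw [star_sub, Complex.star_def, Complex.conj_ofReal]
  simp only [Complex.add_re, Complex.mul_re, Complex.mul_im, Complex.sub_re, Complex.sub_im,
    Complex.ofReal_re, Complex.ofReal_im, Complex.conj_re, Complex.conj_im]
  ring

lemma normSq_sub_cip_eq
    (hlam : lam = (cip G A).re + √((cip G G).re * (cip A A).re - (cip G A).im ^ 2)) :
    Complex.normSq ((lam : ℂ) - cip G A) = (cip G G).re * (cip A A).re := by
  have hdisc : 0 ≤ (cip G G).re * (cip A A).re - (cip G A).im ^ 2 :=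
    sub_nonneg.2 (im_cip_sq_le G A)
  rw [Complex.normSq_apply]
  simp only [Complex.sub_re, Complex.sub_im, Complex.ofReal_re, Complex.ofReal_im, hlam]
  nlinarith [Real.sq_sqrt hdisc]

end Eigvec

theorem stmt_4_general {n : ℕ} (A G : Fin n → ℂ)
    (lam : ℝ)
    (hlam : lam = (cip G A).re +
      Real.sqrt ((cip G G).re * (cip A A).re - ((cip G A).im) ^ 2))
    (v : Fin n → ℂ)
    (hv : v = ((lam : ℂ) - cip G A) • G + (((cip G G).re : ℂ)) • A) :
    (dyadSum A G).mulVec v = (lam : ℂ) • v ∧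
    (cip v v).re = 2 * lam * (cip G G).re *
      Real.sqrt ((cip G G).re * (cip A A).re - ((cip G A).im) ^ 2) := by
  have hquad := normSq_sub_cip_eq hlam
  obtain rfl : v = dyadEigvec A G lam := hv
  refine ⟨dyadSum_mulVec_dyadEigvec hquad, ?_⟩
  rw [re_cip_dyadEigvec_self hquad, hlam]
  ring

/-- For linearly independent `A, G` with `λ₊ > 0`, the vector
`v = (λ₊ − ⟨G,A⟩)G + ‖G‖²A` is an eigenvector of `χ = |A⟩⟨G| + |G⟩⟨A|` with eigenvalue `λ₊`,
and `‖v‖² = 2λ₊‖G‖²√(‖G‖²‖A‖² − (Im⟨G,A⟩)²)`. -/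
theorem stmt_4 {n : ℕ} (A G : Fin n → ℂ) (hAG : LinearIndependent ℂ ![A, G])
    (lam : ℝ)
    (hlam : lam = (cip G A).re +
      Real.sqrt ((cip G G).re * (cip A A).re - ((cip G A).im) ^ 2))
    (hpos : 0 < lam)
    (v : Fin n → ℂ)
    (hv : v = ((lam : ℂ) - cip G A) • G + (((cip G G).re : ℂ)) • A) :
    (dyadSum A G).mulVec v = (lam : ℂ) • v ∧
    (cip v v).re = 2 * lam * (cip G G).re *
      Real.sqrt ((cip G G).re * (cip A A).re - ((cip G A).im) ^ 2) :=
  stmt_4_general A G lam hlam v hv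
end
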